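/- arXiv:2306.04174 — 2 statements merged into one kernel-verified Lean document; each statement's English description precedes it below -/
import Mathlib

section
/- Let 𝒜 ⊆ ℝ² be the closed unit Euclidean ball, let P : ℝ² → 𝒜 be the metric projection onto 𝒜 (so P(w) = w/‖w‖ for ‖w‖ > 1 and P(w) = w for ‖w‖ ≤ 1), let c = (0, 1/2), and define φ : ℝ² → ℝ by φ(w) = ‖P(w) − c‖². Then φ is differentiable at every w with ‖w‖ > 1, and its gradient is orthogonal to w there: ⟨∇φ(w), w⟩ = 0 for all w with ‖w‖ > 1. -/
/-!
Outside the unit ball the projection is `w ↦ w / ‖w‖`, which is smooth there and invariant under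
positive rescaling of `w`. Hence `φ` is constant along the ray through `w`, and its derivative in
the direction `w`, which is `⟪∇φ(w), w⟫`, vanishes.
-/

open scoped RealInnerProductSpace

/-- The metric projection onto the closed unit Euclidean ball in `ℝ²`:
`P(w) = w` for `‖w‖ ≤ 1` and `P(w) = w/‖w‖` otherwise. -/
noncomputable def projBall (w : EuclideanSpace ℝ (Fin 2)) : EuclideanSpace ℝ (Fin 2) :=
  if ‖w‖ ≤ 1 then w else ‖w‖⁻¹ • w

/-- The target point `c = (0, 1/2)`. -/
noncomputable def cTarget : EuclideanSpace ℝ (Fin 2) :=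
  EuclideanSpace.single (1 : Fin 2) ((1 : ℝ) / 2)

/-- The expected loss of the projection-layer decision map:
`φ(w) = ‖P(w) − c‖²`. -/
noncomputable def phiProj (w : EuclideanSpace ℝ (Fin 2)) : ℝ :=
  ‖projBall w - cTarget‖ ^ 2

open Filter Topology

theorem inner_gradient_self_eq_zero_of_eventually_smul_eq {E : Type*} [NormedAddCommGroup E]
    [InnerProductSpace ℝ E] [CompleteSpace E] {f : E → ℝ} {w : E}
    (hf : DifferentiableAt ℝ f w) (hray : ∀ᶠ t : ℝ in 𝓝 1, f (t • w) = f w) :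
    ⟪gradient f w, w⟫ = 0 := by
  have hline : HasDerivAt (fun t : ℝ => t • w) w 1 := by
    simpa using (hasDerivAt_id (1 : ℝ)).smul_const w
  have hcomp : HasDerivAt (fun t : ℝ => f (t • w)) (fderiv ℝ f w w) 1 :=
    hf.hasFDerivAt.comp_hasDerivAt_of_eq (1 : ℝ) hline (one_smul ℝ w).symm
  have hconst : HasDerivAt (fun t : ℝ => f (t • w)) 0 1 :=
    (hasDerivAt_const (1 : ℝ) (f w)).congr_of_eventuallyEq hray
  rw [gradient, InnerProductSpace.toDual_symm_apply]
  exact hcomp.unique hconst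

section Normalize

variable {E : Type*} [NormedAddCommGroup E] [InnerProductSpace ℝ E]

theorem differentiableAt_inv_norm_smul {w : E} (hw : w ≠ 0) :
    DifferentiableAt ℝ (fun v : E => ‖v‖⁻¹ • v) w :=
  ((differentiableAt_id.norm ℝ hw).inv (norm_ne_zero_iff.mpr hw)).smul differentiableAt_id

theorem inv_norm_smul_smul_of_pos {t : ℝ} (ht : 0 < t) (v : E) :
    ‖t • v‖⁻¹ • (t • v) = ‖v‖⁻¹ • v := by
  rw [norm_smul, Real.norm_of_nonneg ht.le, smul_smul]
  congr 1
  field_simp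

end Normalize

theorem projBall_of_one_lt {v : EuclideanSpace ℝ (Fin 2)} (hv : 1 < ‖v‖) :
    projBall v = ‖v‖⁻¹ • v :=
  if_neg hv.not_ge

theorem projBall_eventuallyEq_inv_norm_smul {w : EuclideanSpace ℝ (Fin 2)} (hw : 1 < ‖w‖) :
    projBall =ᶠ[𝓝 w] fun v => ‖v‖⁻¹ • v := by
  filter_upwards [continuous_norm.continuousAt.eventually (lt_mem_nhds hw)] with v hv
  exact projBall_of_one_lt hv

theorem differentiableAt_phiProj {w : EuclideanSpace ℝ (Fin 2)} (hw : 1 < ‖w‖) :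
    DifferentiableAt ℝ phiProj w := by
  have hw0 : w ≠ 0 := norm_pos_iff.mp (one_pos.trans hw)
  have hP : DifferentiableAt ℝ projBall w :=
    (differentiableAt_inv_norm_smul hw0).congr_of_eventuallyEq
      (projBall_eventuallyEq_inv_norm_smul hw)
  exact (hP.sub_const cTarget).norm_sq ℝ

theorem eventually_phiProj_smul_eq {w : EuclideanSpace ℝ (Fin 2)} (hw : 1 < ‖w‖) :
    ∀ᶠ t : ℝ in 𝓝 1, phiProj (t • w) = phiProj w := by
  have hscaled : ∀ᶠ t : ℝ in 𝓝 1, 1 < ‖t • w‖ := by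
    have hcont : Continuous fun t : ℝ => ‖t • w‖ := by fun_prop
    exact hcont.continuousAt.eventually (lt_mem_nhds (by simpa using hw))
  filter_upwards [hscaled, lt_mem_nhds one_pos] with t ht htpos
  rw [phiProj, phiProj, projBall_of_one_lt ht, projBall_of_one_lt hw,
    inv_norm_smul_smul_of_pos htpos]

/-- **Gradient projection phenomenon (Section 4.4): orthogonality of the gradient.**
The loss `φ(w) = ‖P(w) − (0, 1/2)‖²` of a decision map with a projection output layer
is differentiable at every infeasible point `‖w‖ > 1`, and there its gradient is
orthogonal to `w`: `⟪∇φ(w), w⟫ = 0`. -/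
theorem gradient_projection_orthogonal :
    ∀ w : EuclideanSpace ℝ (Fin 2), 1 < ‖w‖ →
      DifferentiableAt ℝ phiProj w ∧ (inner ℝ (gradient phiProj w) w : ℝ) = 0 := fun _ hw =>
  ⟨differentiableAt_phiProj hw, inner_gradient_self_eq_zero_of_eventually_smul_eq
    (differentiableAt_phiProj hw) (eventually_phiProj_smul_eq hw)⟩
end

section
/- Let 𝒜 ⊆ ℝ² be the closed unit Euclidean ball, let P : ℝ² → 𝒜 be the metric projection onto 𝒜, let c = (0, 1/2), and define φ : ℝ² → ℝ by φ(w) = ‖P(w) − c‖². For any positive step sizes (η_k)_{k≥1} and any initial point w₀ with ‖w₀‖ > 1, the gradient descent iterates w_k = w_{k−1} − η_k ∇φ(w_{k−1}) are well defined for all k ≥ 1 and satisfy ‖w_k‖ ≥ ‖w_{k−1}‖; in particular ‖w_k‖ ≥ ‖w₀‖ > 1 for all k, so the iterates never enter the feasible set 𝒜. -/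
section aux

open InnerProductSpace

local notation "E" => EuclideanSpace ℝ (Fin 2)

/-- Away from the ball, `φ` agrees with a smooth formula. -/
lemma phi_eventually_eq {x : E} (hx : 1 < ‖x‖) :
    phiProj =ᶠ[nhds x]
      fun y => 1 - 2 * (⟪cTarget, y⟫_ℝ * ‖y‖⁻¹) + ‖cTarget‖ ^ 2 := by
  have hopen : IsOpen {y : E | 1 < ‖y‖} := isOpen_lt continuous_const continuous_norm
  filter_upwards [hopen.mem_nhds hx] with y hy
  have hy' : ¬ ‖y‖ ≤ 1 := not_le.2 hy
  have hy0 : ‖y‖ ≠ 0 := by positivity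
  have hns : ‖(‖y‖⁻¹ • y : E)‖ = 1 := by
    rw [norm_smul, Real.norm_eq_abs, abs_of_nonneg (by positivity), inv_mul_cancel₀ hy0]
  rw [phiProj, projBall, if_neg hy', norm_sub_sq_real, hns, real_inner_smul_left,
    real_inner_comm]
  ring

lemma phi_hasFDerivAt {x : E} (hx : 1 < ‖x‖) :
    ∃ F' : E →L[ℝ] ℝ, HasFDerivAt phiProj F' x ∧ F' x = 0 := by
  have hx0 : ‖x‖ ≠ 0 := by positivity
  have hx2 : ‖x‖ ^ 2 ≠ 0 := pow_ne_zero _ hx0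
  -- derivative of `y ↦ ⟪c, y⟫`
  have hA : HasFDerivAt (fun y : E => ⟪cTarget, y⟫_ℝ) (innerSL ℝ cTarget) x :=
    (innerSL ℝ cTarget).hasFDerivAt
  -- derivative of the norm
  have hBsq : HasFDerivAt (fun y : E => ‖y‖ ^ 2) (2 • (innerSL ℝ x)) x :=
    (hasStrictFDerivAt_norm_sq x).hasFDerivAt
  have hB : HasFDerivAt (fun y : E => ‖y‖)
      ((1 / (2 * Real.sqrt (‖x‖ ^ 2))) • (2 • (innerSL ℝ x))) x := by
    have := hBsq.sqrt hx2
    refine this.congr_of_eventuallyEq ?_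
    filter_upwards with y using (Real.sqrt_sq (norm_nonneg y)).symm
  -- derivative of the inverse norm
  have hC : HasFDerivAt (fun y : E => ‖y‖⁻¹)
      ((-(‖x‖ ^ 2)⁻¹) • ((1 / (2 * Real.sqrt (‖x‖ ^ 2))) • (2 • (innerSL ℝ x)))) x := by
    have hinv : HasDerivAt (fun t : ℝ => t⁻¹) (-(‖x‖ ^ 2)⁻¹) ‖x‖ := by
      simpa using hasDerivAt_inv hx0
    exact hinv.comp_hasFDerivAt x hB
  have hD := hA.mul hC
  have hE := (hD.const_mul (2 : ℝ)).const_sub (1 : ℝ)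
  have hF := hE.add_const (‖cTarget‖ ^ 2)
  refine ⟨_, hF.congr_of_eventuallyEq (phi_eventually_eq hx), ?_⟩
  have hxx : ⟪x, x⟫_ℝ = ‖x‖ ^ 2 := real_inner_self_eq_norm_sq x
  have hsq : Real.sqrt (‖x‖ ^ 2) = ‖x‖ := Real.sqrt_sq (norm_nonneg x)
  simp only [ContinuousLinearMap.coe_smul', Pi.smul_apply, ContinuousLinearMap.neg_apply,
    ContinuousLinearMap.add_apply, ContinuousLinearMap.coe_sub', Pi.sub_apply,
    ContinuousLinearMap.smul_apply, innerSL_apply_apply, smul_eq_mul, hxx, hsq]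
  field_simp
  ring

lemma grad_orth {x : E} (hx : 1 < ‖x‖) :
    DifferentiableAt ℝ phiProj x ∧ ⟪gradient phiProj x, x⟫_ℝ = 0 := by
  obtain ⟨F', hF, hF0⟩ := phi_hasFDerivAt hx
  refine ⟨hF.differentiableAt, ?_⟩
  rw [gradient, hF.fderiv, InnerProductSpace.toDual_symm_apply, hF0]

lemma norm_step {x g : E} (horth : ⟪g, x⟫_ℝ = 0) (η : ℝ) : ‖x‖ ≤ ‖x - η • g‖ := by
  have h1 : ⟪x, η • g⟫_ℝ = 0 := by
    rw [real_inner_smul_right, real_inner_comm, horth, mul_zero]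
  have h2 : ‖x - η • g‖ ^ 2 = ‖x‖ ^ 2 + ‖η • g‖ ^ 2 := by
    rw [norm_sub_sq_real, h1]; ring
  nlinarith [norm_nonneg (x - η • g), norm_nonneg x, sq_nonneg ‖η • g‖]

end aux

/-- **Gradient projection phenomenon (Section 4.4): infeasible initializations never
become feasible.**
For any positive step sizes and any initialization `w₀` with `‖w₀‖ > 1`, the gradient
descent iterates `w_k = w_{k−1} − η_k ∇φ(w_{k−1})` for `φ(w) = ‖P(w) − (0, 1/2)‖²` are
well defined (the loss is differentiable at every iterate), have nondecreasing norms
`‖w_k‖ ≥ ‖w_{k−1}‖ ≥ ‖w₀‖ > 1`, and hence never enter the feasible set, the closed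
unit ball. -/
theorem gradient_projection_never_feasible
    (η : ℕ → ℝ) (hη : ∀ k, 0 < η k)
    (w : ℕ → EuclideanSpace ℝ (Fin 2)) (hw0 : 1 < ‖w 0‖)
    (hrec : ∀ k : ℕ, w (k + 1) = w k - η (k + 1) • gradient phiProj (w k)) :
    ∀ k : ℕ, DifferentiableAt ℝ phiProj (w k) ∧
      ‖w k‖ ≤ ‖w (k + 1)‖ ∧ ‖w 0‖ ≤ ‖w k‖ ∧ 1 < ‖w k‖ ∧
      w k ∉ Metric.closedBall (0 : EuclideanSpace ℝ (Fin 2)) 1 := by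
  -- first establish the norm bounds by induction
  have key : ∀ k : ℕ, ‖w 0‖ ≤ ‖w k‖ := by
    intro k
    induction k with
    | zero => exact le_refl _
    | succ n ih =>
      have hn : 1 < ‖w n‖ := lt_of_lt_of_le hw0 ih
      obtain ⟨_, horth⟩ := grad_orth hn
      calc ‖w 0‖ ≤ ‖w n‖ := ih
        _ ≤ ‖w (n + 1)‖ := by rw [hrec n]; exact norm_step horth _
  intro k
  have hk : 1 < ‖w k‖ := lt_of_lt_of_le hw0 (key k)
  obtain ⟨hdiff, horth⟩ := grad_orth hk
  refine ⟨hdiff, ?_, key k, hk, ?_⟩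
  · rw [hrec k]; exact norm_step horth _
  · simp only [Metric.mem_closedBall, dist_zero_right]
    exact not_le.2 hk
end
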